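/- Let x₁ = 2(y₁y₄+y₂y₃), x₂ = 2(y₂y₄−y₁y₃), x₃ = y₁²+y₂²−y₃²−y₄², Ψ = −2 arctan(y₁/y₂), r = y₁²+y₂²+y₃²+y₄². Then the pullback of the metric (r/4)(dΨ + A·dx)² + (1/(4r))dx·dx, with A₁ = x₂/(r(r+x₃)), A₂ = −x₁/(r(r+x₃)), A₃ = 0, equals the flat metric dy₁²+dy₂²+dy₃²+dy₄² (on the open set where y₂ ≠ 0 and r + x₃ > 0). -/

import Mathlib

/-
`xmap` is the Hopf map ℝ⁴ → ℝ³, whose fibres are the orbits of a circle action; let ω be the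
covector dual to its generator. Then |dx|² = 4r(|dy|² − ω²/r): the Hopf map scales horizontal
directions by 2√r and kills the vertical one. On the other hand dΨ + A·dx = −2ω/r, i.e. the monopole
connection form pulls back to the vertical covector. Hence
(r/4)(dΨ + A·dx)² + |dx|²/(4r) = ω²/r + (|dy|² − ω²/r) = |dy|².
-/

noncomputable section

/-- The map x(y): x₁ = 2(y₁y₄+y₂y₃), x₂ = 2(y₂y₄−y₁y₃), x₃ = y₁²+y₂²−y₃²−y₄². -/
def xmap (y : Fin 4 → ℝ) : Fin 3 → ℝ :=
  ![2 * (y 0 * y 3 + y 1 * y 2), 2 * (y 1 * y 3 - y 0 * y 2),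
    y 0 ^ 2 + y 1 ^ 2 - y 2 ^ 2 - y 3 ^ 2]

/-- Ψ = −2 arctan(y₁/y₂). -/
def Psi (y : Fin 4 → ℝ) : ℝ := -2 * Real.arctan (y 0 / y 1)

/-- r = y₁²+y₂²+y₃²+y₄² (= |x|). -/
def rmap (y : Fin 4 → ℝ) : ℝ := y 0 ^ 2 + y 1 ^ 2 + y 2 ^ 2 + y 3 ^ 2

/-- The Dirac monopole potential A₁ = x₂/(r(r+x₃)), A₂ = −x₁/(r(r+x₃)), A₃ = 0. -/
def Apot (y : Fin 4 → ℝ) : Fin 3 → ℝ :=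
  ![xmap y 1 / (rmap y * (rmap y + xmap y 2)),
    -(xmap y 0) / (rmap y * (rmap y + xmap y 2)), 0]

open ContinuousLinearMap

theorem hasFDerivAt_arctan_div {ι : Type*} [Fintype ι] {i j : ι} {y : ι → ℝ} (hj : y j ≠ 0) :
    HasFDerivAt (fun y : ι → ℝ => Real.arctan (y i / y j))
      ((y i ^ 2 + y j ^ 2)⁻¹ • (y j • proj i - y i • proj j : (ι → ℝ) →L[ℝ] ℝ)) y := by
  have hcoord (k : ι) : HasFDerivAt (fun y : ι → ℝ => y k) (proj k : (ι → ℝ) →L[ℝ] ℝ) y :=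
    hasFDerivAt_apply k y
  have hquot := ((hcoord i).fun_mul ((hasDerivAt_inv hj).comp_hasFDerivAt y (hcoord j))).arctan
  simp only [Function.comp_def, ← div_eq_mul_inv] at hquot
  refine hquot.congr_fderiv ?_
  ext dy
  simp only [one_div, neg_smul, smul_neg, smul_add, add_apply, neg_apply, smul_apply, proj_apply,
    smul_eq_mul, sub_apply]
  field_simp
  ring

/- The covector dual to the vector field (y₂, −y₁, −y₄, y₃), which generates the circle action
preserving `xmap`, i.e. the Hopf fibres. -/
def hopfVerticalForm (y dy : Fin 4 → ℝ) : ℝ := y 1 * dy 0 - y 0 * dy 1 - y 3 * dy 2 + y 2 * dy 3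

section

variable (y dy : Fin 4 → ℝ)

theorem rmap_add_xmap_two : rmap y + xmap y 2 = 2 * (y 0 ^ 2 + y 1 ^ 2) := by
  simp only [rmap, xmap, Matrix.cons_val]
  ring

theorem fderiv_xmap_zero_apply :
    fderiv ℝ (fun y' => xmap y' 0) y dy =
      2 * (dy 0 * y 3 + y 0 * dy 3 + dy 1 * y 2 + y 1 * dy 2) := by
  simp (disch := fun_prop) only [xmap, Matrix.cons_val_zero, fderiv_fun_mul, fderiv_fun_add,
    fderiv_apply, fderiv_fun_id, comp_id, smul_add, fderiv_fun_const, Pi.zero_apply, comp_zero,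
    smul_zero, add_zero, add_apply, smul_apply, proj_apply, smul_eq_mul]
  ring

theorem fderiv_xmap_one_apply :
    fderiv ℝ (fun y' => xmap y' 1) y dy =
      2 * (dy 1 * y 3 + y 1 * dy 3 - dy 0 * y 2 - y 0 * dy 2) := by
  simp (disch := fun_prop) only [xmap, Matrix.cons_val_one, Matrix.cons_val_zero, fderiv_fun_mul,
    fderiv_fun_sub, fderiv_apply, fderiv_fun_id, comp_id, fderiv_fun_const, Pi.zero_apply,
    comp_zero, smul_zero, add_zero, smul_apply, sub_apply, add_apply, proj_apply, smul_eq_mul]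
  ring

theorem fderiv_xmap_two_apply :
    fderiv ℝ (fun y' => xmap y' 2) y dy =
      2 * (y 0 * dy 0 + y 1 * dy 1 - y 2 * dy 2 - y 3 * dy 3) := by
  simp (disch := fun_prop) only [xmap, Matrix.cons_val, fderiv_fun_sub, fderiv_fun_add,
    fderiv_fun_pow, Nat.add_one_sub_one, pow_one, nsmul_eq_mul, Nat.cast_ofNat, fderiv_apply,
    fderiv_fun_id, comp_id, sub_apply, add_apply, smul_apply, proj_apply, smul_eq_mul]
  ring

theorem sum_fderiv_xmap_sq :
    ∑ i, (fderiv ℝ (fun y' => xmap y' i) y dy) ^ 2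
      = 4 * rmap y * ∑ i, dy i ^ 2 - 4 * hopfVerticalForm y dy ^ 2 := by
  rw [Fin.sum_univ_three, Fin.sum_univ_four, fderiv_xmap_zero_apply, fderiv_xmap_one_apply,
    fderiv_xmap_two_apply, rmap, hopfVerticalForm]
  ring

variable {y}

theorem fderiv_Psi_apply (hy : y 1 ≠ 0) :
    fderiv ℝ Psi y dy = -2 * ((y 1 * dy 0 - y 0 * dy 1) / (y 0 ^ 2 + y 1 ^ 2)) := by
  unfold Psi
  rw [((hasFDerivAt_arctan_div hy).const_mul (-2)).fderiv]
  simp only [neg_smul, neg_apply, smul_apply, sub_apply, proj_apply, smul_eq_mul]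
  ring

theorem fderiv_Psi_add_Apot_dxmap (hy : y 1 ≠ 0) :
    fderiv ℝ Psi y dy + ∑ i, Apot y i * fderiv ℝ (fun y' => xmap y' i) y dy
      = -2 * hopfVerticalForm y dy / rmap y := by
  have hpos : 0 < y 0 ^ 2 + y 1 ^ 2 := by positivity
  rw [Fin.sum_univ_three, fderiv_Psi_apply dy hy, fderiv_xmap_zero_apply, fderiv_xmap_one_apply]
  simp only [Apot, rmap_add_xmap_two]
  simp only [xmap, rmap, hopfVerticalForm, Matrix.cons_val_one, Matrix.cons_val_zero,
    Matrix.cons_val, zero_mul, add_zero]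
  field_simp
  ring

end

theorem pullback_gibbons_hawking_metric_flat_general
    (y : Fin 4 → ℝ) (hy : y 1 ≠ 0) (dy : Fin 4 → ℝ) :
    (rmap y / 4) *
        (fderiv ℝ Psi y dy + ∑ i, Apot y i * fderiv ℝ (fun y' => xmap y' i) y dy) ^ 2
      + (1 / (4 * rmap y)) * ∑ i, (fderiv ℝ (fun y' => xmap y' i) y dy) ^ 2
      = ∑ i, dy i ^ 2 := by
  have hr : 0 < rmap y := by rw [rmap]; positivity
  rw [fderiv_Psi_add_Apot_dxmap dy hy, sum_fderiv_xmap_sq]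
  field_simp
  ring

/-- The pullback of the Gibbons–Hawking metric (r/4)(dΨ + A·dx)² + (1/(4r))dx·dx
under (y₁,…,y₄) ↦ (x, Ψ) equals the flat metric dy₁²+dy₂²+dy₃²+dy₄², on the
open set where y₂ ≠ 0 and r + x₃ > 0. -/
theorem pullback_gibbons_hawking_metric_flat
    (y : Fin 4 → ℝ) (hy : y 1 ≠ 0) (hrx : 0 < rmap y + xmap y 2) (dy : Fin 4 → ℝ) :
    (rmap y / 4) *
        (fderiv ℝ Psi y dy + ∑ i, Apot y i * fderiv ℝ (fun y' => xmap y' i) y dy) ^ 2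
      + (1 / (4 * rmap y)) * ∑ i, (fderiv ℝ (fun y' => xmap y' i) y dy) ^ 2
      = ∑ i, dy i ^ 2 :=
  pullback_gibbons_hawking_metric_flat_general y hy dy

end
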